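/- arXiv:2406.09218 — 2 statements merged into one kernel-verified Lean document; each statement's English description precedes it below -/
import Mathlib

section
/- Cartan subalgebras of ideals in reductive Lie algebras: Let 𝔤 be a finite-dimensional reductive Lie algebra over ℂ, let 𝔥 ⊆ 𝔤 be a Lie ideal, and let 𝔱 ⊆ 𝔤 be a Cartan subalgebra. Then 𝔥 ∩ 𝔱 is a Cartan subalgebra of 𝔥. -/
/-!
Choose an ideal `K` complementary to `H`. The projection of `L` onto `H` along `K` commutes with
the adjoint action, so it preserves the Cartan subalgebra `T`, which is the generalised zero
weight space of its own adjoint action; hence `T = (T ∩ H) ⊕ (T ∩ K)`. Since `⁅H, K⁆ = 0`, an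
element of `H` normalising `T ∩ H` normalises all of `T`, so it lies in `T`.
-/

noncomputable def LieSubmodule.projection {R L M : Type*} [CommRing R] [LieRing L] [LieAlgebra R L]
    [AddCommGroup M] [Module R M] [LieRingModule L M] [LieModule R L M]
    {N₁ N₂ : LieSubmodule R L M} (h : IsCompl N₁ N₂) : M →ₗ⁅R,L⁆ M where
  toLinearMap := (N₁ : Submodule R M).projection N₂ (isCompl_toSubmodule.mpr h)
  map_lie' {x m} := by
    have hcomm := (LinearMap.IsIdempotentElem.commute_iff (T := LieModule.toEnd R L M x)
      (Submodule.isIdempotentElem_projection (isCompl_toSubmodule.mpr h))).mpr ⟨?_, ?_⟩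
    · exact LinearMap.congr_fun hcomm m
    all_goals
      simp only [Submodule.range_projection, Submodule.ker_projection, Module.End.mem_invtSubmodule]
      exact fun _ hm ↦ lie_mem _ hm

theorem LieIdeal.lie_eq_zero_of_disjoint {R L : Type*} [CommRing R] [LieRing L] [LieAlgebra R L]
    {I J : LieIdeal R L} (h : Disjoint I J) {x y : L} (hx : x ∈ I) (hy : y ∈ J) : ⁅x, y⁆ = 0 := by
  have hmem : ⁅x, y⁆ ∈ I ⊓ J := LieSubmodule.lie_le_inf I J (LieSubmodule.lie_mem_lie hx hy)
  rwa [h.eq_bot, LieSubmodule.mem_bot] at hmem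

namespace LieSubalgebra

variable {R L : Type*} [CommRing R] [LieRing L] [LieAlgebra R L]

theorem IsCartanSubalgebra.apply_mem_of_lieModuleHom [IsNoetherian R L] {T : LieSubalgebra R L}
    [T.IsCartanSubalgebra] (f : L →ₗ⁅R,L⁆ L) {x : L} (hx : x ∈ T) : f x ∈ T := by
  rw [← LieAlgebra.zeroRootSubalgebra_eq_of_is_cartan R L T] at hx ⊢
  exact LieModule.map_genWeightSpace_le (f.restrictLie T) (LieSubmodule.mem_map_of_mem hx)

theorem isNilpotent_comap_incl (K T : LieSubalgebra R L) [LieRing.IsNilpotent T] :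
    LieRing.IsNilpotent (T.comap K.incl) := by
  let f : T.comap K.incl →ₗ⁅R⁆ T :=
    { toFun x := ⟨x.1.1, x.2⟩, map_add' _ _ := rfl, map_smul' _ _ := rfl, map_lie' := rfl }
  refine Function.Injective.lieAlgebra_isNilpotent (f := f) fun x y hxy ↦ ?_
  ext : 2
  exact (congrArg Subtype.val hxy :)

theorem normalizer_comap_incl_eq_self {T : LieSubalgebra R L} (hT : T.normalizer = T)
    {H K : LieIdeal R L} (hHK : Disjoint H K) (hsplit : ∀ t ∈ T, ∃ a ∈ T, a ∈ H ∧ t - a ∈ K) :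
    (T.comap (H : LieSubalgebra R L).incl).normalizer = T.comap (H : LieSubalgebra R L).incl := by
  refine le_antisymm (fun x hx ↦ ?_) (le_normalizer _)
  suffices (x : L) ∈ T.normalizer by rwa [hT] at this
  rw [mem_normalizer_iff] at hx ⊢
  intro t ht
  obtain ⟨a, haT, haH, hdiff⟩ := hsplit t ht
  have hlie : ⁅(x : L), t⁆ = ⁅(x : L), a⁆ := by
    rw [← sub_eq_zero, ← lie_sub]
    exact LieIdeal.lie_eq_zero_of_disjoint hHK x.2 hdiff
  rw [hlie]
  exact hx ⟨a, haH⟩ haT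

theorem IsCartanSubalgebra.comap_incl_of_isCompl [IsNoetherian R L] {T : LieSubalgebra R L}
    [T.IsCartanSubalgebra] {H K : LieIdeal R L} (h : IsCompl H K) :
    (T.comap (H : LieSubalgebra R L).incl).IsCartanSubalgebra where
  nilpotent := isNilpotent_comap_incl _ _
  self_normalizing := normalizer_comap_incl_eq_self self_normalizing h.disjoint fun t ht ↦
    ⟨LieSubmodule.projection h t, apply_mem_of_lieModuleHom _ ht,
      Submodule.projection_apply_mem _ t, Submodule.sub_projection_mem _ t⟩

end LieSubalgebra

theorem cartan_inter_ideal_isCartanSubalgebra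
    (L : Type) [LieRing L] [LieAlgebra ℂ L] [FiniteDimensional ℂ L]
    (hreductive : ∀ I : LieIdeal ℂ L, ∃ J : LieIdeal ℂ L, IsCompl I J)
    (H : LieIdeal ℂ L) (T : LieSubalgebra ℂ L) (hT : T.IsCartanSubalgebra) :
    LieSubalgebra.IsCartanSubalgebra
      (LieSubalgebra.comap (LieIdeal.toLieSubalgebra ℂ L H).incl T) := by
  obtain ⟨K, hK⟩ := hreductive H
  exact LieSubalgebra.IsCartanSubalgebra.comap_incl_of_isCompl hK
end

section
/- Efimov's lemma on ideals generated by products of linear forms: Let k be a field and B = k[z_1,…,z_n] a polynomial ring. Let ℓ_1,…,ℓ_s ∈ B be pairwise linearly independent nonzero linear forms in the variables z_i, and for 1 ≤ i ≤ r (with r ≥ 1) let P_i = ∏_{j=1}^s ℓ_j^{d_{i,j}} with exponents d_{i,j} ∈ ℤ_{≥0}. Set d_j = max_{1≤i≤r} d_{i,j} for 1 ≤ j ≤ s. Then the following are equivalent: (i) every homogeneous polynomial in B of degree ≥ ∑_{j=1}^s d_j − n + 1 lies in the ideal (P_1,…,P_r); (ii) the ideal (P_1,…,P_r) ⊆ B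 has finite codimension as a k-vector space; (iii) for every sequence p_1,…,p_r of elements of {1,…,s} such that d_{i,p_i} > 0 for all 1 ≤ i ≤ r, the linear forms ℓ_{p_1},…,ℓ_{p_r} span the n-dimensional space of linear forms in z_1,…,z_n. -/
/-!
(iii) ⇒ (i) is proved by induction on `∑ⱼ dⱼ`, using (iii) in the dual form: every subspace of
`B` not containing all linear forms misses all the factors of some `Pᵢ`. If no nonzero `ℓⱼ` occurs
with positive exponent, this forces `n = 0` or some `Pᵢ = 1`. Otherwise pick such an `ℓ_{j₀}` and
solve `ℓ_{j₀} = 0` for one variable: this identifies `B ⧸ (ℓ_{j₀})` with a polynomial ring in one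
variable fewer, in which the `Pᵢ` having a factor proportional to `ℓ_{j₀}` vanish and the others
form a smaller instance of the problem. Hence `f = g + a ℓ_{j₀}` with `g ∈ I`; after taking
homogeneous components `a` has degree `e - 1`, so by induction again it lies in the ideal obtained
by lowering the exponents of `ℓ_{j₀}` by one, whose product with `ℓ_{j₀}` lies in `I`.

(i) ⇒ (ii) because `B ⧸ I` is then spanned by polynomials of degree at most `∑ⱼ dⱼ`.
(ii) ⇒ (iii): if the `ℓ_{pᵢ}` lie in a subspace `W` missing some `z_m`, a linear functional `λ`
vanishing on `W` with `λ z_m ≠ 0` gives the surjection `z ↦ λ(z) t` of `B ⧸ I` onto `k[t]`.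
-/

open MvPolynomial

section ProductIdeal

variable {R ι κ : Type*} [CommSemiring R] [Fintype ι]

def productIdeal (ℓ : ι → R) (d : κ → ι → ℕ) : Ideal R :=
  Ideal.span (Set.range fun i => ∏ j, ℓ j ^ d i j)

lemma prod_mem_productIdeal (ℓ : ι → R) (d : κ → ι → ℕ) (i : κ) :
    ∏ j, ℓ j ^ d i j ∈ productIdeal ℓ d :=
  Ideal.subset_span (Set.mem_range_self i)

lemma productIdeal_eq_top_of_exponents_eq_zero (ℓ : ι → R) {d : κ → ι → ℕ} {i : κ}
    (hi : ∀ j, d i j = 0) : productIdeal ℓ d = ⊤ :=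
  Ideal.eq_top_of_isUnit_mem _ (prod_mem_productIdeal ℓ d i) (by simp [hi])

lemma productIdeal_comp_le_map {S : Type*} [CommSemiring S] (φ : R →+* S) (ℓ : ι → R)
    (d : κ → ι → ℕ) {κ' : Type*} (g : κ' → κ) :
    productIdeal (fun j => φ (ℓ j)) (fun i j => d (g i) j) ≤ (productIdeal ℓ d).map φ := by
  rw [productIdeal, Ideal.span_le]
  rintro _ ⟨i, rfl⟩
  simpa only [SetLike.mem_coe, map_prod, map_pow] using
    Ideal.mem_map_of_mem φ (prod_mem_productIdeal ℓ d (g i))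

lemma mul_mem_productIdeal_of_decrease [DecidableEq ι] (ℓ : ι → R) (d : κ → ι → ℕ) (j₀ : ι)
    {a : R} (ha : a ∈ productIdeal ℓ (fun i j => d i j - if j = j₀ then 1 else 0)) :
    a * ℓ j₀ ∈ productIdeal ℓ d := by
  induction ha using Submodule.span_induction with
  | mem _ h =>
    obtain ⟨i, rfl⟩ := h
    refine Ideal.mem_of_dvd _ ?_ (prod_mem_productIdeal ℓ d i)
    dsimp only
    rw [Fintype.prod_eq_mul_prod_subtype_ne _ j₀, Fintype.prod_eq_mul_prod_subtype_ne _ j₀]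
    have hrest : ∀ j : {j // j ≠ j₀}, (if (j : ι) = j₀ then 1 else 0) = 0 := fun j => if_neg j.2
    simp only [↓reduceIte, hrest, tsub_zero]
    rw [mul_right_comm, ← pow_succ]
    exact mul_dvd_mul_right (pow_dvd_pow _ (by omega)) _
  | zero => simp
  | add x y _ _ hx hy => simpa [add_mul] using Ideal.add_mem _ hx hy
  | smul b x _ hx => simpa [mul_assoc] using Ideal.mul_mem_left _ b hx

end ProductIdeal

section MaxExponentSum

variable {ι κ : Type*} [Fintype ι] [Fintype κ]

def maxExponentSum (d : κ → ι → ℕ) : ℕ := ∑ j, Finset.univ.sup fun i => d i j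

variable [DecidableEq ι]

lemma maxExponentSum_eq_add (d : κ → ι → ℕ) (j₀ : ι) :
    maxExponentSum d = (Finset.univ.sup fun i => d i j₀) +
      ∑ j : {j // j ≠ j₀}, Finset.univ.sup fun i => d i j :=
  Fintype.sum_eq_add_sum_subtype_ne _ j₀

lemma maxExponentSum_comp_add_le (d : κ → ι → ℕ) {κ' : Type*} [Fintype κ'] (g : κ' → κ)
    {j₀ : ι} (hj₀ : ∀ i, d (g i) j₀ = 0) :
    maxExponentSum (fun i j => d (g i) j) + Finset.univ.sup (fun i => d i j₀) ≤
      maxExponentSum d := by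
  rw [maxExponentSum_eq_add _ j₀, maxExponentSum_eq_add _ j₀]
  have hcol : (Finset.univ.sup fun i => d (g i) j₀) = 0 := by simp [hj₀]
  have hle : ∀ j : {j // j ≠ j₀}, (Finset.univ.sup fun i => d (g i) j) ≤
      Finset.univ.sup fun i => d i j :=
    fun j => Finset.sup_le fun i _ => Finset.le_sup (f := fun i => d i j) (Finset.mem_univ _)
  have := Finset.sum_le_sum fun j (_ : j ∈ Finset.univ) => hle j
  omega

lemma maxExponentSum_decrease_lt (d : κ → ι → ℕ) {i₀ : κ} {j₀ : ι} (h : 0 < d i₀ j₀) :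
    maxExponentSum (fun i j => d i j - if j = j₀ then 1 else 0) < maxExponentSum d := by
  rw [maxExponentSum_eq_add _ j₀, maxExponentSum_eq_add _ j₀]
  have hle : d i₀ j₀ ≤ Finset.univ.sup fun i => d i j₀ :=
    Finset.le_sup (f := fun i => d i j₀) (Finset.mem_univ _)
  have hcol : (Finset.univ.sup fun i => d i j₀ - if j₀ = j₀ then 1 else 0) ≤
      (Finset.univ.sup fun i => d i j₀) - 1 :=
    Finset.sup_le fun i _ => by
      have := Finset.le_sup (f := fun i => d i j₀) (Finset.mem_univ i)
      simp only [↓reduceIte]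
      omega
  have hrest : ∀ j : {j // j ≠ j₀},
      (Finset.univ.sup fun i => d i j - if (j : ι) = j₀ then 1 else 0) =
        Finset.univ.sup fun i => d i j := fun j => by simp [j.2]
  simp only [hrest, ↓reduceIte] at hcol ⊢
  omega

end MaxExponentSum

section Homogeneous

variable {σ R : Type*} [CommSemiring R]

attribute [local instance] MvPolynomial.gradedAlgebra

lemma isHomogeneous_one_iff_mem_span_X {p : MvPolynomial σ R} :
    p.IsHomogeneous 1 ↔ p ∈ Submodule.span R (Set.range X) := by
  rw [← homogeneousSubmodule_one_eq_span_X, mem_homogeneousSubmodule]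

lemma exists_sum_smul_X_eq_of_isHomogeneous_one [Fintype σ] {ℓ : MvPolynomial σ R}
    (hℓ : ℓ.IsHomogeneous 1) (hne : ℓ ≠ 0) : ∃ c : σ → R, ∃ m₀, c m₀ ≠ 0 ∧ ∑ m, c m • X m = ℓ := by
  obtain ⟨c, hc⟩ := (Submodule.mem_span_range_iff_exists_fun R).mp
    (isHomogeneous_one_iff_mem_span_X.mp hℓ)
  obtain ⟨m₀, hm₀⟩ : ∃ m₀, c m₀ ≠ 0 := by
    by_contra! h
    exact hne (by simp [← hc, h])
  exact ⟨c, m₀, hm₀, hc⟩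

lemma isHomogeneous_productIdeal {ι κ : Type*} [Fintype ι] {ℓ : ι → MvPolynomial σ R}
    (hℓ : ∀ j, (ℓ j).IsHomogeneous 1) (d : κ → ι → ℕ) :
    (productIdeal ℓ d).IsHomogeneous (homogeneousSubmodule σ R) := by
  refine Ideal.homogeneous_span _ _ ?_
  rintro _ ⟨i, rfl⟩
  exact ⟨_, IsHomogeneous.prod _ _ _ fun j _ => (hℓ j).pow _⟩

lemma homogeneousComponent_mul_of_isHomogeneous {P : MvPolynomial σ R} {m : ℕ}
    (hP : P.IsHomogeneous m) (a : MvPolynomial σ R) (e : ℕ) :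
    homogeneousComponent e (a * P) =
      if m ≤ e then homogeneousComponent (e - m) a * P else 0 := by
  rw [← decomposition.decompose'_apply, ← decomposition.decompose'_apply]
  exact DirectSum.coe_decompose_mul_of_right_mem (homogeneousSubmodule σ R) e hP

lemma mem_of_mem_sup_span_singleton {I : Ideal (MvPolynomial σ R)}
    (hI : I.IsHomogeneous (homogeneousSubmodule σ R)) {ℓ f : MvPolynomial σ R} {e : ℕ}
    (hℓ : ℓ.IsHomogeneous 1) (hf : f.IsHomogeneous e) (hmem : f ∈ I ⊔ Ideal.span {ℓ})
    (hlow : 0 < e → ∀ a : MvPolynomial σ R, a.IsHomogeneous (e - 1) → a * ℓ ∈ I) :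
    f ∈ I := by
  rw [sup_comm, Ideal.mem_span_singleton_sup] at hmem
  obtain ⟨a, g, hg, rfl⟩ := hmem
  rw [← homogeneousComponent_eq_self hf, map_add, homogeneousComponent_mul_of_isHomogeneous hℓ]
  refine Ideal.add_mem _ ?_ (homogeneousComponent_mem_of_mem hI hg e)
  split_ifs with he
  · exact hlow he _ (homogeneousComponent_isHomogeneous _ _)
  · exact I.zero_mem

end Homogeneous

variable {σ k : Type*} [Field k]

lemma finiteDimensional_quotient_of_isHomogeneous_mem [Finite σ] {I : Ideal (MvPolynomial σ k)}
    (N : ℕ) (h : ∀ e (f : MvPolynomial σ k), N < e → f.IsHomogeneous e → f ∈ I) :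
    FiniteDimensional k (MvPolynomial σ k ⧸ I) := by
  set π := (Ideal.Quotient.mkₐ k I).toLinearMap
  have hmap : (restrictTotalDegree σ k N).map π = ⊤ := by
    refine eq_top_iff.mpr fun x _ => ?_
    obtain ⟨f, rfl⟩ := Ideal.Quotient.mkₐ_surjective k I x
    rw [← sum_homogeneousComponent f, map_sum]
    refine Submodule.sum_mem _ fun e _ => ?_
    by_cases he : e ≤ N
    · refine Submodule.mem_map_of_mem ((mem_restrictTotalDegree _ _ _).mpr ?_)
      exact (homogeneousComponent_isHomogeneous e f).totalDegree_le.trans he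
    · have hmem := h e _ (not_le.mp he) (homogeneousComponent_isHomogeneous e f)
      simp [π, Ideal.Quotient.eq_zero_iff_mem.mpr hmem]
  refine Module.Finite.of_surjective (π.comp (restrictTotalDegree σ k N).subtype) ?_
  rw [← LinearMap.range_eq_top, LinearMap.range_comp, Submodule.range_subtype, hmap]

/-- Condition (iii) in dual form, see `avoidsSubspaces_iff`. -/
def AvoidsSubspaces {ι κ : Type*} (ℓ : ι → MvPolynomial σ k) (d : κ → ι → ℕ) : Prop :=
  ∀ W : Submodule k (MvPolynomial σ k), ¬ Submodule.span k (Set.range X) ≤ W →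
    ∃ i, ∀ j, 0 < d i j → ℓ j ∉ W

section AvoidsSubspaces

variable {ι κ : Type*} {ℓ : ι → MvPolynomial σ k} {d : κ → ι → ℕ}

lemma avoidsSubspaces_iff (hℓ : ∀ j, (ℓ j).IsHomogeneous 1) :
    AvoidsSubspaces ℓ d ↔ ∀ p : κ → ι, (∀ i, 0 < d i (p i)) →
      Submodule.span k (Set.range fun i => ℓ (p i)) = Submodule.span k (Set.range X) := by
  constructor
  · intro h p hp
    refine le_antisymm (Submodule.span_le.mpr ?_) (by_contra fun hX => ?_)
    · rintro _ ⟨i, rfl⟩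
      exact isHomogeneous_one_iff_mem_span_X.mp (hℓ (p i))
    · obtain ⟨i, hi⟩ := h _ hX
      exact hi (p i) (hp i) (Submodule.subset_span ⟨i, rfl⟩)
  · intro h W hW
    by_contra! hfactor
    choose p hp hpW using hfactor
    exact hW (h p hp ▸ Submodule.span_le.mpr (Set.range_subset_iff.mpr hpW))

lemma AvoidsSubspaces.mono {d' : κ → ι → ℕ} (h : AvoidsSubspaces ℓ d)
    (hd : ∀ i j, 0 < d' i j → 0 < d i j) : AvoidsSubspaces ℓ d' :=
  fun W hW => (h W hW).imp fun _ hi j hj => hi j (hd _ j hj)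

lemma AvoidsSubspaces.map {τ : Type*} (h : AvoidsSubspaces ℓ d)
    (φ : MvPolynomial σ k →ₐ[k] MvPolynomial τ k)
    (hφ : Submodule.span k (Set.range X) ≤ (Submodule.span k (Set.range X)).map φ.toLinearMap) :
    AvoidsSubspaces (fun j => φ (ℓ j))
      (fun (i : {i // ∀ j, φ (ℓ j) = 0 → d i j = 0}) j => d i j) := by
  intro W hW
  obtain ⟨i, hi⟩ := h (W.comap φ.toLinearMap) fun hle =>
    hW (hφ.trans (Submodule.map_le_iff_le_comap.mpr hle))
  refine ⟨⟨i, fun j hj => ?_⟩, hi⟩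
  by_contra hd
  exact hi j (Nat.pos_of_ne_zero hd) (by simp [hj])

end AvoidsSubspaces

lemma aeval_C_mul_X_of_mem_span_X (v : MvPolynomial σ k →ₗ[k] k) {q : MvPolynomial σ k}
    (hq : q ∈ Submodule.span k (Set.range X)) :
    aeval (fun m => Polynomial.C (v (X m)) * Polynomial.X) q =
      Polynomial.C (v q) * Polynomial.X := by
  induction hq using Submodule.span_induction with
  | mem _ h => obtain ⟨m, rfl⟩ := h; exact aeval_X _ m
  | zero => simp
  | add x y _ _ hx hy => simp [hx, hy, add_mul]
  | smul a x _ hx => simp [hx, Polynomial.smul_eq_C_mul, mul_assoc]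

lemma aeval_C_mul_X_surjective {v : σ → k} {m : σ} (hm : v m ≠ 0) :
    Function.Surjective
      (aeval fun m => Polynomial.C (v m) * Polynomial.X : MvPolynomial σ k →ₐ[k] Polynomial k) := by
  intro y
  refine ⟨Polynomial.aeval (C (v m)⁻¹ * X m) y, ?_⟩
  rw [← Polynomial.aeval_algHom_apply]
  simp [← mul_assoc, ← Polynomial.C_mul, inv_mul_cancel₀ hm]

lemma not_finite_quotient_of_le_ker {A : Type*} [CommRing A] [Algebra k A] {I : Ideal A}
    (Φ : A →ₐ[k] Polynomial k) (hΦ : Function.Surjective Φ) (hI : I ≤ RingHom.ker Φ) :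
    ¬ Module.Finite k (A ⧸ I) := fun _ =>
  Polynomial.not_finite <| Module.Finite.of_surjective (Ideal.Quotient.liftₐ I Φ hI).toLinearMap
    (Ideal.Quotient.lift_surjective_of_surjective I hI hΦ)

lemma avoidsSubspaces_of_finiteDimensional {ι κ : Type*} [Fintype ι] {ℓ : ι → MvPolynomial σ k}
    (hℓ : ∀ j, (ℓ j).IsHomogeneous 1) {d : κ → ι → ℕ}
    (hfin : FiniteDimensional k (MvPolynomial σ k ⧸ productIdeal ℓ d)) :
    AvoidsSubspaces ℓ d := by
  intro W hW
  by_contra! hfactor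
  obtain ⟨m, hm⟩ : ∃ m, X m ∉ W := by
    by_contra! h
    exact hW (Submodule.span_le.mpr (Set.range_subset_iff.mpr h))
  obtain ⟨v, hvm, hWv⟩ := W.exists_le_ker_of_notMem hm
  set Φ : MvPolynomial σ k →ₐ[k] Polynomial k :=
    aeval fun m => Polynomial.C (v (X m)) * Polynomial.X
  refine not_finite_quotient_of_le_ker Φ (aeval_C_mul_X_surjective hvm) ?_ hfin
  rw [productIdeal, Ideal.span_le]
  rintro _ ⟨i, rfl⟩
  obtain ⟨j, hdj, hℓj⟩ := hfactor i
  have hΦℓ : Φ (ℓ j) = 0 := by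
    rw [aeval_C_mul_X_of_mem_span_X v (isHomogeneous_one_iff_mem_span_X.mp (hℓ j)), hWv hℓj,
      map_zero, zero_mul]
  simp only [SetLike.mem_coe, RingHom.mem_ker, map_prod, map_pow]
  exact Finset.prod_eq_zero (Finset.mem_univ j) (by rw [hΦℓ, zero_pow hdj.ne'])

section EliminateVar

variable [Fintype σ] [DecidableEq σ] (c : σ → k) (m₀ : σ)

/-- Substitutes for `X m₀` its solution of `∑ m, c m • X m = 0`. -/
noncomputable def eliminateVar : MvPolynomial σ k →ₐ[k] MvPolynomial {m // m ≠ m₀} k :=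
  aeval fun m => if h : m = m₀ then -(c m₀)⁻¹ • ∑ t : {m // m ≠ m₀}, c t • X t else X ⟨m, h⟩

lemma eliminateVar_X_of_ne {m : σ} (h : m ≠ m₀) : eliminateVar c m₀ (X m) = X ⟨m, h⟩ := by
  simp [eliminateVar, h]

lemma eliminateVar_X_self :
    eliminateVar c m₀ (X m₀) = -(c m₀)⁻¹ • ∑ t : {m // m ≠ m₀}, c t • X t := by
  simp [eliminateVar]

lemma eliminateVar_rename (g : MvPolynomial {m // m ≠ m₀} k) :
    eliminateVar c m₀ (rename Subtype.val g) = g := by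
  rw [eliminateVar, aeval_rename]
  convert aeval_X_left_apply g
  ext1 t
  simp [t.2]

lemma eliminateVar_surjective : Function.Surjective (eliminateVar c m₀) :=
  fun g => ⟨_, eliminateVar_rename c m₀ g⟩

lemma isHomogeneous_eliminateVar_X (m : σ) : (eliminateVar c m₀ (X m)).IsHomogeneous 1 := by
  by_cases h : m = m₀
  · subst h
    rw [eliminateVar_X_self, isHomogeneous_one_iff_mem_span_X]
    exact Submodule.smul_mem _ _ <| Submodule.sum_mem _ fun t _ =>
      Submodule.smul_mem _ _ (Submodule.subset_span ⟨t, rfl⟩)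
  · rw [eliminateVar_X_of_ne c m₀ h]
    exact isHomogeneous_X k _

lemma isHomogeneous_eliminateVar {f : MvPolynomial σ k} {e : ℕ} (hf : f.IsHomogeneous e) :
    (eliminateVar c m₀ f).IsHomogeneous e := by
  have heq : aeval (fun m => eliminateVar c m₀ (X m)) = eliminateVar c m₀ := (aeval_unique _).symm
  simpa [heq] using hf.aeval _ (isHomogeneous_eliminateVar_X c m₀)

lemma span_X_le_map_eliminateVar :
    Submodule.span k (Set.range X) ≤
      (Submodule.span k (Set.range X)).map (eliminateVar c m₀).toLinearMap := by
  rw [Submodule.span_le]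
  rintro _ ⟨t, rfl⟩
  exact ⟨X t, Submodule.subset_span ⟨t, rfl⟩, eliminateVar_X_of_ne c m₀ t.2⟩

lemma sum_smul_X_eq_add_rename :
    ∑ m, c m • (X m : MvPolynomial σ k) =
      c m₀ • X m₀ + rename Subtype.val (∑ t : {m // m ≠ m₀}, c t • X t) := by
  simp [Fintype.sum_eq_add_sum_subtype_ne _ m₀]

variable {c m₀}

lemma eliminateVar_sum_smul_X (hc : c m₀ ≠ 0) : eliminateVar c m₀ (∑ m, c m • X m) = 0 := by
  rw [sum_smul_X_eq_add_rename c m₀, map_add, eliminateVar_rename, map_smul, eliminateVar_X_self,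
    smul_smul, mul_neg, mul_inv_cancel₀ hc, neg_one_smul, neg_add_cancel]

lemma ker_eliminateVar (hc : c m₀ ≠ 0) :
    RingHom.ker (eliminateVar c m₀) = Ideal.span {∑ m, c m • X m} := by
  set ℓ : MvPolynomial σ k := ∑ m, c m • X m
  refine le_antisymm (fun f hf => ?_)
    ((Ideal.span_singleton_le_iff_mem _).mpr (eliminateVar_sum_smul_X hc))
  -- `rename Subtype.val ∘ eliminateVar c m₀` is the identity modulo `ℓ`
  have hmk : (Ideal.Quotient.mkₐ k (Ideal.span {ℓ})).comp
      ((rename Subtype.val).comp (eliminateVar c m₀)) = Ideal.Quotient.mkₐ k (Ideal.span {ℓ}) := by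
    refine algHom_ext fun m => ?_
    by_cases h : m = m₀
    · subst h
      simp only [AlgHom.comp_apply, eliminateVar_X_self, Ideal.Quotient.mkₐ_eq_mk,
        Ideal.Quotient.eq]
      have hsum : rename Subtype.val (∑ t : {t // t ≠ m}, c t • X t) = ℓ - c m • X m := by
        rw [eq_sub_iff_add_eq, add_comm]
        exact (sum_smul_X_eq_add_rename c m).symm
      rw [map_smul, hsum, smul_sub, smul_smul, neg_mul, inv_mul_cancel₀ hc, neg_one_smul,
        sub_neg_eq_add, add_sub_cancel_right]
      exact Submodule.smul_of_tower_mem _ _ (Ideal.mem_span_singleton_self ℓ)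
    · simp [eliminateVar_X_of_ne c m₀ h]
  have := congrArg (· f) hmk
  simp only [AlgHom.comp_apply, (RingHom.mem_ker).mp hf, map_zero] at this
  exact Ideal.Quotient.eq_zero_iff_mem.mp this.symm

end EliminateVar

lemma mem_productIdeal_of_factors_eq_zero {ι κ : Type*} [Fintype ι] [Fintype σ]
    {ℓ : ι → MvPolynomial σ k} {d : κ → ι → ℕ} (hav : AvoidsSubspaces ℓ d)
    (h0 : ∀ i j, 0 < d i j → ℓ j = 0) {e : ℕ} {f : MvPolynomial σ k}
    (he : 0 < e + Fintype.card σ) (hf : f.IsHomogeneous e) : f ∈ productIdeal ℓ d := by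
  cases isEmpty_or_nonempty σ with
  | inl hσ =>
    suffices f = 0 by simp [this]
    by_contra hne
    have := hf.inj_right (isHomogeneous_of_isEmpty σ k f) hne
    simp_all
  | inr hσ =>
    obtain ⟨m⟩ := hσ
    obtain ⟨i, hi⟩ := hav ⊥ fun h => X_ne_zero (R := k) m <|
      (Submodule.mem_bot k).mp (h (Submodule.subset_span ⟨m, rfl⟩))
    rw [productIdeal_eq_top_of_exponents_eq_zero ℓ (i := i) fun j => ?_]
    · exact Submodule.mem_top
    · by_contra hj
      exact hi j (Nat.pos_of_ne_zero hj)
        ((Submodule.mem_bot k).mpr (h0 i j (Nat.pos_of_ne_zero hj)))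

theorem isHomogeneous_mem_productIdeal {ι κ : Type*} [Fintype ι] [DecidableEq ι] [Fintype σ]
    [DecidableEq σ] [Fintype κ] {ℓ : ι → MvPolynomial σ k} (hℓ : ∀ j, (ℓ j).IsHomogeneous 1)
    {d : κ → ι → ℕ} (hav : AvoidsSubspaces ℓ d) {e : ℕ} {f : MvPolynomial σ k}
    (he : maxExponentSum d + 1 ≤ e + Fintype.card σ) (hf : f.IsHomogeneous e) :
    f ∈ productIdeal ℓ d := by
  induction hN : maxExponentSum d using Nat.strong_induction_on generalizing σ κ e f with
  | _ N ih =>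
  classical
  subst hN
  by_cases h0 : ∀ i j, 0 < d i j → ℓ j = 0
  · exact mem_productIdeal_of_factors_eq_zero hav h0 (by omega) hf
  obtain ⟨i₀, j₀, hd₀, hℓ₀⟩ : ∃ i j, 0 < d i j ∧ ℓ j ≠ 0 := by simpa using h0
  obtain ⟨c, m₀, hm₀, hc⟩ := exists_sum_smul_X_eq_of_isHomogeneous_one (hℓ j₀) hℓ₀
  set φ := eliminateVar c m₀
  have hφℓ₀ : φ (ℓ j₀) = 0 := hc ▸ eliminateVar_sum_smul_X hm₀
  have hcard : Fintype.card {m // m ≠ m₀} = Fintype.card σ - 1 := Set.card_ne_eq m₀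
  have hcol : d i₀ j₀ ≤ Finset.univ.sup fun i => d i j₀ :=
    Finset.le_sup (f := fun i => d i j₀) (Finset.mem_univ _)
  set S := {i // ∀ j, φ (ℓ j) = 0 → d i j = 0}
  have hsum := maxExponentSum_comp_add_le d (Subtype.val : S → κ) (j₀ := j₀)
    fun i => i.2 j₀ hφℓ₀
  have hmem : f ∈ productIdeal ℓ d ⊔ Ideal.span {ℓ j₀} := by
    rw [← hc, ← ker_eliminateVar hm₀, RingHom.ker_eq_comap_bot,
      ← Ideal.comap_map_of_surjective _ (eliminateVar_surjective c m₀)]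
    refine productIdeal_comp_le_map φ.toRingHom ℓ d (Subtype.val : S → κ) ?_
    exact ih _ (by omega) (fun j => isHomogeneous_eliminateVar c m₀ (hℓ j))
      (hav.map φ (span_X_le_map_eliminateVar c m₀)) (by omega)
      (isHomogeneous_eliminateVar c m₀ hf) rfl
  refine mem_of_mem_sup_span_singleton (isHomogeneous_productIdeal hℓ d) (hℓ j₀) hf hmem
    fun he₀ a ha => mul_mem_productIdeal_of_decrease ℓ d j₀ ?_
  have hlt := maxExponentSum_decrease_lt d hd₀
  refine ih _ hlt hℓ (hav.mono fun i j h => ?_) (by omega) ha rfl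
  split_ifs at h <;> omega

theorem efimov_lemma_products_of_linear_forms_general
    (k : Type) [Field k] (n s r : ℕ)
    (ℓ : Fin s → MvPolynomial (Fin n) k)
    (hhom : ∀ j, (ℓ j).IsHomogeneous 1)
    (d : Fin r → Fin s → ℕ) :
    ((∀ (e : ℕ) (p : MvPolynomial (Fin n) k), p.IsHomogeneous e →
        (∑ j, ((Finset.univ.sup fun i => d i j : ℕ) : ℤ)) - (n : ℤ) + 1 ≤ (e : ℤ) →
        p ∈ Ideal.span (Set.range fun i => ∏ j, ℓ j ^ d i j)) ↔
      FiniteDimensional k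
        (MvPolynomial (Fin n) k ⧸ Ideal.span (Set.range fun i => ∏ j, ℓ j ^ d i j))) ∧
    (FiniteDimensional k
        (MvPolynomial (Fin n) k ⧸ Ideal.span (Set.range fun i => ∏ j, ℓ j ^ d i j)) ↔
      ∀ p : Fin r → Fin s, (∀ i, 0 < d i (p i)) →
        Submodule.span k (Set.range fun i => ℓ (p i)) =
          Submodule.span k
            (Set.range (MvPolynomial.X : Fin n → MvPolynomial (Fin n) k))) := by
  have hsum : (∑ j, ((Finset.univ.sup fun i => d i j : ℕ) : ℤ)) = maxExponentSum d := by
    simp [maxExponentSum]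
  rw [hsum, ← avoidsSubspaces_iff hhom]
  have hmem (hav : AvoidsSubspaces ℓ d) (e : ℕ) (f : MvPolynomial (Fin n) k)
      (hf : f.IsHomogeneous e) (he : (maxExponentSum d : ℤ) - n + 1 ≤ e) :
      f ∈ productIdeal ℓ d :=
    isHomogeneous_mem_productIdeal hhom hav (by simp only [Fintype.card_fin]; omega) hf
  have hfin (h : ∀ e (f : MvPolynomial (Fin n) k), f.IsHomogeneous e →
      (maxExponentSum d : ℤ) - n + 1 ≤ e → f ∈ productIdeal ℓ d) :
      FiniteDimensional k (MvPolynomial (Fin n) k ⧸ productIdeal ℓ d) :=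
    finiteDimensional_quotient_of_isHomogeneous_mem (maxExponentSum d) fun e f he hf =>
      h e f hf (by omega)
  exact ⟨⟨hfin, fun h => hmem (avoidsSubspaces_of_finiteDimensional hhom h)⟩,
    ⟨avoidsSubspaces_of_finiteDimensional hhom, fun h => hfin (hmem h)⟩⟩

theorem efimov_lemma_products_of_linear_forms
    (k : Type) [Field k] (n s r : ℕ) (hr : 0 < r)
    (ℓ : Fin s → MvPolynomial (Fin n) k)
    (hhom : ∀ j, (ℓ j).IsHomogeneous 1)
    (hne : ∀ j, ℓ j ≠ 0)
    (hindep : ∀ i j, i ≠ j → ∀ c : k, ℓ i ≠ c • ℓ j)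
    (d : Fin r → Fin s → ℕ) :
    ((∀ (e : ℕ) (p : MvPolynomial (Fin n) k), p.IsHomogeneous e →
        (∑ j, ((Finset.univ.sup fun i => d i j : ℕ) : ℤ)) - (n : ℤ) + 1 ≤ (e : ℤ) →
        p ∈ Ideal.span (Set.range fun i => ∏ j, ℓ j ^ d i j)) ↔
      FiniteDimensional k
        (MvPolynomial (Fin n) k ⧸ Ideal.span (Set.range fun i => ∏ j, ℓ j ^ d i j))) ∧
    (FiniteDimensional k
        (MvPolynomial (Fin n) k ⧸ Ideal.span (Set.range fun i => ∏ j, ℓ j ^ d i j)) ↔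
      ∀ p : Fin r → Fin s, (∀ i, 0 < d i (p i)) →
        Submodule.span k (Set.range fun i => ℓ (p i)) =
          Submodule.span k
            (Set.range (MvPolynomial.X : Fin n → MvPolynomial (Fin n) k))) :=
  efimov_lemma_products_of_linear_forms_general k n s r ℓ hhom d
end
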